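/- Let f be a Schwartz function on ℝⁿ. For every nonnegative integer k and every unit vector u, the moment ∫_ℝ f̂(u,s) s^k ds equals P_k(u), where P_k(y) = ∫_{ℝⁿ} f(x) ⟨x,y⟩^k dx is (the restriction to the sphere of) a homogeneous polynomial of degree k in y. -/

import Mathlib

open MeasureTheory
open scoped RealInnerProductSpace

/-- The hyperplane Radon transform `f̂(u,s) = ∫_{⟪x,u⟫=s} f dσ`. -/
noncomputable def radonTransform {n : ℕ} (f : EuclideanSpace ℝ (Fin n) → ℂ)
    (u : EuclideanSpace ℝ (Fin n)) (s : ℝ) : ℂ :=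
  ∫ v : ((ℝ ∙ u)ᗮ : Submodule ℝ (EuclideanSpace ℝ (Fin n))), f (s • u + (v : EuclideanSpace ℝ (Fin n)))

/-- `P_k(y) = ∫ f(x) ⟪x,y⟫^k dx`, a homogeneous polynomial of degree `k` in `y`. -/
noncomputable def momentPoly {n : ℕ} (f : EuclideanSpace ℝ (Fin n) → ℂ) (k : ℕ)
    (y : EuclideanSpace ℝ (Fin n)) : ℂ :=
  ∫ x : EuclideanSpace ℝ (Fin n), f x * ((⟪x, y⟫ : ℝ) : ℂ) ^ k

/-! For a unit vector `u`, the orthogonal decomposition makes `(s, v) ↦ s • u + v` a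
measure-preserving bijection from `ℝ × (ℝ ∙ u)ᗮ` onto the whole space, and `⟪s • u + v, u⟫ = s`. Fubini therefore turns
`∫ f̂(u,s) φ(s) ds` into `∫ f(x) φ(⟪x,u⟫) dx`; for `φ(s) = s^k` the integrand is dominated by
`‖x‖^k ‖f x‖`, which is integrable since `f` is Schwartz. -/

section OrthogonalSlicing

variable {E : Type*} [NormedAddCommGroup E] [InnerProductSpace ℝ E]

theorem inner_smul_add_orthogonal {u : E} (hu : ‖u‖ = 1) (s : ℝ) (v : (ℝ ∙ u)ᗮ) :
    ⟪s • u + v, u⟫ = s := by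
  rw [inner_add_left, real_inner_smul_left, real_inner_self_eq_norm_sq, hu,
    Submodule.mem_orthogonal_singleton_iff_inner_left.1 v.2]
  ring

variable [FiniteDimensional ℝ E] [MeasurableSpace E] [BorelSpace E]

theorem Submodule.measurePreserving_add_orthogonal (K : Submodule ℝ E) :
    MeasurePreserving (fun p : K × Kᗮ => (p.1 : E) + p.2) (volume.prod volume) volume := by
  rw [← Measure.volume_eq_prod]
  exact K.orthogonalDecomposition.symm.measurePreserving.comp (WithLp.volume_preserving_toLp K Kᗮ)

theorem measurePreserving_smul_add_orthogonal {u : E} (hu : ‖u‖ = 1) :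
    MeasurePreserving (fun p : ℝ × (ℝ ∙ u)ᗮ => p.1 • u + (p.2 : E)) (volume.prod volume) volume :=
  (Submodule.measurePreserving_add_orthogonal (ℝ ∙ u)).comp
    (((LinearIsometryEquiv.toSpanUnitSingleton u hu).measurePreserving).prod
      (MeasurePreserving.id volume))

theorem integral_integral_smul_add_orthogonal {F : Type*} [NormedAddCommGroup F]
    [NormedSpace ℝ F] {u : E} (hu : ‖u‖ = 1) {g : E → F} (hg : Integrable g) :
    ∫ s : ℝ, ∫ v : (ℝ ∙ u)ᗮ, g (s • u + v) = ∫ x, g x := by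
  have hΦ := measurePreserving_smul_add_orthogonal hu
  rw [← integral_prod (fun p : ℝ × (ℝ ∙ u)ᗮ => g (p.1 • u + p.2))
    (hΦ.integrable_comp_of_integrable hg), ← hΦ.map_eq,
    integral_map hΦ.measurable.aemeasurable (hΦ.map_eq ▸ hg.aestronglyMeasurable)]

end OrthogonalSlicing

theorem SchwartzMap.integrable_mul_inner_pow {E : Type*} [NormedAddCommGroup E]
    [InnerProductSpace ℝ E] [MeasurableSpace E] [BorelSpace E] [SecondCountableTopology E]
    (μ : Measure E) [μ.HasTemperateGrowth] (f : SchwartzMap E ℂ) (k : ℕ) (y : E) :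
    Integrable (fun x => f x * ((⟪x, y⟫ : ℝ) : ℂ) ^ k) μ := by
  refine ((f.integrable_pow_mul μ k).const_mul (‖y‖ ^ k)).mono' (by fun_prop)
    (ae_of_all _ fun x => ?_)
  calc ‖f x * ((⟪x, y⟫ : ℝ) : ℂ) ^ k‖ = ‖f x‖ * |⟪x, y⟫| ^ k := by
        rw [norm_mul, norm_pow, Complex.norm_real, Real.norm_eq_abs]
    _ ≤ ‖f x‖ * (‖x‖ * ‖y‖) ^ k := by gcongr; exact abs_real_inner_le_norm x y
    _ = ‖y‖ ^ k * (‖x‖ ^ k * ‖f x‖) := by ring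

theorem integral_radonTransform_mul {n : ℕ} {f : EuclideanSpace ℝ (Fin n) → ℂ}
    {u : EuclideanSpace ℝ (Fin n)} (hu : ‖u‖ = 1) {φ : ℝ → ℂ}
    (hf : Integrable fun x => f x * φ ⟪x, u⟫) :
    ∫ s : ℝ, radonTransform f u s * φ s = ∫ x, f x * φ ⟪x, u⟫ := by
  have hslice (s : ℝ) : radonTransform f u s * φ s =
      ∫ v : (ℝ ∙ u)ᗮ, f (s • u + v) * φ ⟪s • u + v, u⟫ := by
    simp_rw [radonTransform, ← integral_mul_const, inner_smul_add_orthogonal hu]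
  simp_rw [hslice]
  exact integral_integral_smul_add_orthogonal hu hf

theorem momentPoly_smul {n : ℕ} (f : EuclideanSpace ℝ (Fin n) → ℂ) (k : ℕ) (c : ℝ)
    (y : EuclideanSpace ℝ (Fin n)) :
    momentPoly f k (c • y) = (c : ℂ) ^ k * momentPoly f k y := by
  simp_rw [momentPoly, ← integral_const_mul, real_inner_smul_right]
  congr 1 with x
  push_cast
  ring

/-- **Helgason moment condition**: for a Schwartz function `f` on `ℝⁿ`, every nonnegative
integer `k` and every unit vector `u`, the moment `∫_ℝ f̂(u,s) s^k ds` equals `P_k(u)`,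
where `P_k(y) = ∫ f(x) ⟪x,y⟫^k dx` is homogeneous of degree `k`. -/
theorem radon_moment_condition {n : ℕ} (f : SchwartzMap (EuclideanSpace ℝ (Fin n)) ℂ)
    (k : ℕ) (u : EuclideanSpace ℝ (Fin n)) (hu : ‖u‖ = 1) :
    (∫ s : ℝ, radonTransform (fun x => f x) u s * (s : ℂ) ^ k) = momentPoly (fun x => f x) k u
      ∧ ∀ (c : ℝ) (y : EuclideanSpace ℝ (Fin n)),
        momentPoly (fun x => f x) k (c • y) = (c : ℂ) ^ k * momentPoly (fun x => f x) k y :=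
  ⟨integral_radonTransform_mul hu (f.integrable_mul_inner_pow volume k u),
    momentPoly_smul (fun x => f x) k⟩
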